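/- In the exploded graph, every walk from a virtual copy of s to a virtual copy of t that uses at most m virtual edges corresponds to a physical s–t path with at most m elbows; consequently, minimizing path cost with elbow penalty β over the exploded graph with β → ∞ yields, in the limit, a physical path with the minimum possible number of elbows among all s–t paths. -/

import Mathlib

open scoped Classical

inductive Dir | X | Y | Z
deriving DecidableEq

def EAdj {V0 : Type} (E0 : V0 → V0 → Prop) (dir : V0 → V0 → Dir) :
    V0 × Dir → V0 × Dir → Prop :=
  fun a b => (a.1 = b.1 ∧ a.2 ≠ b.2) ∨ (E0 a.1 b.1 ∧ a.2 = b.2 ∧ dir a.1 b.1 = a.2)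

def steps {α : Type*} (w : List α) : List (α × α) := w.zip w.tail

noncomputable def ecost {V0 : Type} (pos : V0 → EuclideanSpace ℝ (Fin 3)) (β : ℝ)
    (w : List (V0 × Dir)) : ℝ :=
  ((steps w).map (fun q => if q.1.1 = q.2.1 then β else dist (pos q.1.1) (pos q.2.1))).sum

/-- Number of elbows (direction changes) of a physical path. -/
def elbows {V0 : Type} (dir : V0 → V0 → Dir) (p : List V0) : ℕ :=
  (steps (steps p)).countP fun q => decide (dir q.1.1 q.1.2 ≠ dir q.2.1 q.2.2)

def IsPhysPath {V0 : Type} (E0 : V0 → V0 → Prop) (s t : V0) (p : List V0) : Prop :=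
  p ≠ [] ∧ p.Chain' E0 ∧ p.head? = some s ∧ p.getLast? = some t ∧ p.Nodup

def IsEPath {V0 : Type} (E0 : V0 → V0 → Prop) (dir : V0 → V0 → Dir) (s t : V0)
    (w : List (V0 × Dir)) : Prop :=
  w ≠ [] ∧ w.Chain' (EAdj E0 dir) ∧ w.Nodup ∧
  (w.map Prod.fst).head? = some s ∧ (w.map Prod.fst).getLast? = some t ∧
  ∀ q ∈ steps (steps w), ¬ (q.1.1.1 = q.1.2.1 ∧ q.2.1.1 = q.2.2.1)

/-!
Projecting an exploded walk to its vertices and collapsing repetitions gives a physical walk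
whose direction sequence is a sublist of the direction labels of the walk. Only virtual edges
change the label, and deleting entries of a sequence never increases its number of changes, so
the walk has at least as many virtual edges as its projection has elbows; erasing loops keeps
the consecutive pairs as a sublist and so adds no elbows either. Conversely, a simple physical
path lifts to an exploded path that takes a virtual edge exactly at each elbow. Since the cost
is the physical length plus `β` times the number of virtual edges, once `β` exceeds the length
of the lift of an elbow-minimal path, a cost-minimal exploded path cannot afford a single
virtual edge beyond the minimum number of elbows.
-/

open scoped List

section Steps

variable {α β : Type*}

@[simp] lemma steps_nil : steps ([] : List α) = [] := rfl

@[simp] lemma steps_singleton (a : α) : steps [a] = [] := rfl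

@[simp] lemma steps_cons_cons (a b : α) (l : List α) :
    steps (a :: b :: l) = (a, b) :: steps (b :: l) := rfl

lemma steps_cons_of_head?_eq_some {a b : α} {l : List α} (h : l.head? = some b) :
    steps (a :: l) = (a, b) :: steps l := by
  cases l with
  | nil => simp at h
  | cons c l => simp_all

lemma steps_map (f : α → β) (l : List α) : steps (l.map f) = (steps l).map (Prod.map f f) := by
  rw [steps, ← List.map_tail, List.zip_map, steps]

lemma isChain_iff_forall_mem_steps {R : α → α → Prop} {l : List α} :
    l.IsChain R ↔ ∀ q ∈ steps l, R q.1 q.2 := by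
  induction l using List.twoStepInduction with
  | nil => simp
  | singleton => simp
  | cons_cons a b l _ ih => simp [List.isChain_cons_cons, ih]

lemma steps_sublist_cons (a : α) (l : List α) : steps l <+ steps (a :: l) := by
  cases l <;> simp

lemma steps_sublist_append_left (l₁ l₂ : List α) : steps l₂ <+ steps (l₁ ++ l₂) := by
  induction l₁ with
  | nil => rfl
  | cons a l₁ ih => exact ih.trans (steps_sublist_cons a _)

lemma map_fst_steps_sublist (l : List α) : (steps l).map Prod.fst <+ l := by
  induction l using List.twoStepInduction with
  | nil => simp
  | singleton => simp
  | cons_cons a b l _ ih => simpa using (ih b).cons_cons a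

end Steps

lemma List.exists_destutter'_eq_cons {α : Type*} (R : α → α → Prop) [DecidableRel R] (a : α)
    (l : List α) : ∃ tl, l.destutter' R a = a :: tl := by
  induction l generalizing a with
  | nil => exact ⟨[], rfl⟩
  | cons b l ih =>
    rw [List.destutter'_cons]
    split
    · exact ⟨_, rfl⟩
    · exact ih a

lemma steps_destutter'_ne {α : Type*} [DecidableEq α] (a : α) (l : List α) :
    steps (l.destutter' (· ≠ ·) a) = (steps (a :: l)).filter (fun q => q.1 ≠ q.2) := by
  induction l generalizing a with
  | nil => simp
  | cons b l ih =>
    by_cases hab : a = b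
    · subst hab; simp [ih]
    · obtain ⟨tl, htl⟩ := l.exists_destutter'_eq_cons (· ≠ ·) b
      rw [List.destutter'_cons_pos _ hab, htl, steps_cons_cons, ← htl, ih]
      simp [hab]

lemma List.getLast?_destutter'_ne {α : Type*} [DecidableEq α] (a : α) (l : List α) :
    (l.destutter' (· ≠ ·) a).getLast? = (a :: l).getLast? := by
  induction l generalizing a with
  | nil => simp
  | cons b l ih =>
    by_cases hab : a = b
    · subst hab; simp [ih]
    · rw [List.destutter'_cons_pos _ hab, List.getLast?_cons_cons, ← ih b]
      obtain ⟨tl, htl⟩ := l.exists_destutter'_eq_cons (· ≠ ·) b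
      rw [htl, List.getLast?_cons_cons]

section Changes

variable {α : Type*} [DecidableEq α]

def changes (l : List α) : ℕ := (steps l).countP fun q => q.1 ≠ q.2

@[simp] lemma changes_nil : changes ([] : List α) = 0 := rfl

@[simp] lemma changes_singleton (a : α) : changes [a] = 0 := rfl

lemma changes_cons_cons (a b : α) (l : List α) :
    changes (a :: b :: l) = changes (b :: l) + if a = b then 0 else 1 := by
  by_cases h : a = b <;> simp [changes, h]

lemma changes_le_changes_cons (a : α) (l : List α) : changes l ≤ changes (a :: l) := by
  cases l with
  | nil => simp
  | cons b l => rw [changes_cons_cons]; omega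

lemma changes_cons_le (a : α) (l : List α) : changes (a :: l) ≤ changes l + 1 := by
  cases l with
  | nil => simp
  | cons b l => rw [changes_cons_cons]; split <;> omega

lemma changes_headD_cons (a : α) (l : List α) : changes (l.headD a :: l) = changes l := by
  cases l with
  | nil => simp
  | cons b l => simp [changes_cons_cons]

/-- Deleting `x` from `…, p, x, n, …` trades the changes `p ≠ x`, `x ≠ n` for `p ≠ n`. -/
lemma List.Sublist.changes_le {l₁ l₂ : List α} (h : l₁ <+ l₂) :
    changes l₁ ≤ changes l₂ ∧ ∀ a, changes (a :: l₁) ≤ changes (a :: l₂) := by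
  induction h with
  | slnil => simp
  | @cons l₁ l₂ x _ ih =>
    refine ⟨ih.1.trans (changes_le_changes_cons x _), fun a => ?_⟩
    rw [changes_cons_cons]
    by_cases hax : a = x
    · subst hax; simpa using ih.2 a
    · have := changes_le_changes_cons x l₂
      have := changes_cons_le a l₂
      have := ih.2 a
      simp only [hax, if_false]; omega
  | cons_cons x _ ih =>
    refine ⟨ih.2 x, fun a => ?_⟩
    rw [changes_cons_cons, changes_cons_cons]
    have := ih.2 x
    omega

end Changes

/-- Loop erasure: cutting out the closed subwalk between two visits of a vertex. -/
lemma exists_nodup_steps_sublist {α : Type*} (v : α) (l : List α) :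
    ∃ q : List α, q.Nodup ∧ q.head? = some v ∧ q.getLast? = (v :: l).getLast? ∧
      steps q <+ steps (v :: l) := by
  induction l generalizing v with
  | nil => exact ⟨[v], List.nodup_singleton v, rfl, rfl, List.Sublist.refl _⟩
  | cons r l ih =>
    obtain ⟨q, hnd, hhead, hlast, hsteps⟩ := ih r
    by_cases hv : v ∈ q
    · obtain ⟨b, c, rfl⟩ := List.append_of_mem hv
      refine ⟨v :: c, hnd.sublist (List.sublist_append_right b _), rfl, ?_, ?_⟩
      · rw [List.getLast?_cons_cons, ← hlast,
          List.getLast?_append_of_ne_nil _ (List.cons_ne_nil _ _)]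
      · calc steps (v :: c) <+ steps (b ++ v :: c) := steps_sublist_append_left b _
          _ <+ steps (r :: l) := hsteps
          _ <+ steps (v :: r :: l) := steps_sublist_cons v _
    · refine ⟨v :: q, List.nodup_cons.2 ⟨hv, hnd⟩, rfl,
        by simp [List.getLast?_cons, hlast], ?_⟩
      rw [steps_cons_of_head?_eq_some hhead, steps_cons_cons]
      exact hsteps.cons_cons _

def numVirtual {α β : Type*} [DecidableEq α] (w : List (α × β)) : ℕ :=
  (steps w).countP fun q => q.1.1 = q.2.1

def dirs {V0 : Type} (dir : V0 → V0 → Dir) (p : List V0) : List Dir :=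
  (steps p).map fun q => dir q.1 q.2

lemma elbows_eq_changes_dirs {V0 : Type} (dir : V0 → V0 → Dir) (p : List V0) :
    elbows dir p = changes (dirs dir p) := by
  rw [elbows, changes, dirs, steps_map, List.countP_map]
  rfl

section MinElbows

variable {V0 : Type} {E0 : V0 → V0 → Prop} {s t : V0}

noncomputable def minElbows (E0 : V0 → V0 → Prop) (dir : V0 → V0 → Dir) (s t : V0) : ℕ :=
  sInf {n | ∃ p, IsPhysPath E0 s t p ∧ elbows dir p = n}

lemma minElbows_le {dir : V0 → V0 → Dir} {p : List V0} (hp : IsPhysPath E0 s t p) :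
    minElbows E0 dir s t ≤ elbows dir p :=
  Nat.sInf_le ⟨p, hp, rfl⟩

lemma exists_elbows_eq_minElbows (dir : V0 → V0 → Dir) (h : ∃ p, IsPhysPath E0 s t p) :
    ∃ p, IsPhysPath E0 s t p ∧ elbows dir p = minElbows E0 dir s t :=
  Nat.sInf_mem (s := {n | ∃ p, IsPhysPath E0 s t p ∧ elbows dir p = n})
    (h.elim fun p hp => ⟨_, p, hp, rfl⟩)

end MinElbows

section Projection

variable {V0 : Type} [DecidableEq V0] {E0 : V0 → V0 → Prop} {dir : V0 → V0 → Dir}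
  {w : List (V0 × Dir)}

/-- Virtual edges change the direction label and physical edges keep it. -/
lemma changes_map_snd_le_numVirtual (hw : w.IsChain (EAdj E0 dir)) :
    changes (w.map Prod.snd) ≤ numVirtual w := by
  rw [changes, numVirtual, steps_map, List.countP_map]
  refine List.countP_mono_left fun q hq hne => ?_
  rcases isChain_iff_forall_mem_steps.1 hw q hq with ⟨h, -⟩ | ⟨-, h, -⟩
  · simpa using h
  · simp_all

def projPath (w : List (V0 × Dir)) : List V0 := (w.map Prod.fst).destutter (· ≠ ·)

lemma steps_projPath (w : List (V0 × Dir)) :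
    steps (projPath w) =
      ((steps w).filter fun q => q.1.1 ≠ q.2.1).map (Prod.map Prod.fst Prod.fst) := by
  cases w with
  | nil => rfl
  | cons a w =>
    rw [projPath, List.map_cons, List.destutter_cons', steps_destutter'_ne, ← List.map_cons,
      steps_map, List.filter_map]
    rfl

lemma head?_projPath (w : List (V0 × Dir)) : (projPath w).head? = (w.map Prod.fst).head? := by
  cases w with
  | nil => rfl
  | cons a w =>
    obtain ⟨tl, htl⟩ := (w.map Prod.fst).exists_destutter'_eq_cons (· ≠ ·) a.1
    rw [projPath, List.map_cons, List.destutter_cons', htl]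
    rfl

lemma getLast?_projPath (w : List (V0 × Dir)) :
    (projPath w).getLast? = (w.map Prod.fst).getLast? := by
  cases w with
  | nil => rfl
  | cons a w => rw [projPath, List.map_cons, List.destutter_cons', List.getLast?_destutter'_ne]

lemma isChain_projPath (hw : w.IsChain (EAdj E0 dir)) : (projPath w).IsChain E0 := by
  refine isChain_iff_forall_mem_steps.2 fun q hq => ?_
  rw [steps_projPath] at hq
  obtain ⟨q', hq', rfl⟩ := List.mem_map.1 hq
  obtain ⟨hq', hne⟩ := List.mem_filter.1 hq'
  rcases isChain_iff_forall_mem_steps.1 hw q' hq' with ⟨h, -⟩ | ⟨h, -, -⟩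
  · simp_all
  · exact h

lemma dirs_projPath_sublist (hw : w.IsChain (EAdj E0 dir)) :
    dirs dir (projPath w) <+ w.map Prod.snd := by
  have hdir : ∀ q ∈ (steps w).filter (fun q => q.1.1 ≠ q.2.1), dir q.1.1 q.2.1 = q.1.2 := by
    intro q hq
    obtain ⟨hq, hne⟩ := List.mem_filter.1 hq
    rcases isChain_iff_forall_mem_steps.1 hw q hq with ⟨h, -⟩ | ⟨-, -, h⟩
    · simp_all
    · exact h
  calc dirs dir (projPath w)
      _ = ((steps w).filter fun q => q.1.1 ≠ q.2.1).map (fun q => q.1.2) := by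
        rw [dirs, steps_projPath, List.map_map]; exact List.map_congr_left hdir
      _ <+ (steps w).map (fun q => q.1.2) := List.filter_sublist.map _
      _ = ((steps w).map Prod.fst).map Prod.snd := by rw [List.map_map]; rfl
      _ <+ w.map Prod.snd := (map_fst_steps_sublist w).map _

lemma elbows_projPath_le (hw : w.IsChain (EAdj E0 dir)) :
    elbows dir (projPath w) ≤ numVirtual w :=
  calc elbows dir (projPath w) = changes (dirs dir (projPath w)) := elbows_eq_changes_dirs _ _
    _ ≤ changes (w.map Prod.snd) := (dirs_projPath_sublist hw).changes_le.1
    _ ≤ numVirtual w := changes_map_snd_le_numVirtual hw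

end Projection

section PhysicalPath

variable {V0 : Type} {E0 : V0 → V0 → Prop} {s t : V0}

lemma exists_isPhysPath_elbows_le (dir : V0 → V0 → Dir) {p : List V0} (hp : p ≠ [])
    (hE : p.IsChain E0) (hs : p.head? = some s) (ht : p.getLast? = some t) :
    ∃ q, IsPhysPath E0 s t q ∧ elbows dir q ≤ elbows dir p := by
  obtain ⟨v, l, rfl⟩ := List.exists_cons_of_ne_nil hp
  obtain ⟨q, hnd, hhead, hlast, hsteps⟩ := exists_nodup_steps_sublist v l
  have hq : q ≠ [] := by rintro rfl; simp at hhead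
  refine ⟨q, ⟨hq, ?_, hhead.trans hs, hlast.trans ht, hnd⟩, ?_⟩
  · exact isChain_iff_forall_mem_steps.2 fun e he =>
      isChain_iff_forall_mem_steps.1 hE e (hsteps.subset he)
  · rw [elbows_eq_changes_dirs, elbows_eq_changes_dirs]
    exact (hsteps.map _).changes_le.1

lemma exists_isPhysPath_elbows_le_numVirtual [DecidableEq V0] {dir : V0 → V0 → Dir}
    {w : List (V0 × Dir)} (hw : w ≠ []) (hE : w.IsChain (EAdj E0 dir))
    (hs : (w.map Prod.fst).head? = some s) (ht : (w.map Prod.fst).getLast? = some t) :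
    ∃ p, IsPhysPath E0 s t p ∧ elbows dir p ≤ numVirtual w := by
  obtain ⟨p, hp, hle⟩ := exists_isPhysPath_elbows_le dir (p := projPath w)
    (by simpa [projPath] using hw) (isChain_projPath hE)
    ((head?_projPath w).trans hs) ((getLast?_projPath w).trans ht)
  exact ⟨p, hp, hle.trans (elbows_projPath_le hE)⟩

end PhysicalPath

section Lift

variable {V0 : Type} {E0 : V0 → V0 → Prop} (dir : V0 → V0 → Dir)

/-- The exploded path along the physical path `u :: l` that starts at the copy of `u` for
direction `d` and takes a virtual edge exactly where the direction changes. -/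
def liftFrom : Dir → V0 → List V0 → List (V0 × Dir)
  | d, u, [] => [(u, d)]
  | d, u, v :: l =>
    if dir u v = d then (u, d) :: liftFrom d v l
    else (u, d) :: (u, dir u v) :: liftFrom (dir u v) v l

def lift : List V0 → List (V0 × Dir)
  | [] => []
  | u :: l => liftFrom dir ((dirs dir (u :: l)).headD .X) u l

variable {dir}

@[simp] lemma head?_liftFrom (d : Dir) (u : V0) (l : List V0) :
    (liftFrom dir d u l).head? = some (u, d) := by
  cases l with
  | nil => rfl
  | cons v l => rw [liftFrom]; split <;> rfl

lemma getLast?_map_fst_liftFrom (d : Dir) (u : V0) (l : List V0) :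
    ((liftFrom dir d u l).map Prod.fst).getLast? = (u :: l).getLast? := by
  induction l generalizing d u with
  | nil => rfl
  | cons v l ih => rw [liftFrom]; split <;> simp [List.getLast?_cons, ih]

lemma isChain_liftFrom (d : Dir) {u : V0} {l : List V0} (h : (u :: l).IsChain E0) :
    (liftFrom dir d u l).IsChain (EAdj E0 dir) := by
  induction l generalizing d u with
  | nil => simp [liftFrom]
  | cons v l ih =>
    obtain ⟨huv, h⟩ := List.isChain_cons_cons.1 h
    rw [liftFrom]
    split <;> simp_all [List.isChain_cons, EAdj, Ne.symm]

lemma fst_mem_of_mem_liftFrom {d : Dir} {u : V0} {l : List V0} {x : V0 × Dir}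
    (hx : x ∈ liftFrom dir d u l) : x.1 ∈ u :: l := by
  induction l generalizing d u with
  | nil => simp_all [liftFrom]
  | cons v l ih =>
    rw [liftFrom] at hx
    split at hx <;> simp only [List.mem_cons] at hx ⊢ <;> grind

lemma nodup_liftFrom (d : Dir) {u : V0} {l : List V0} (h : (u :: l).Nodup) :
    (liftFrom dir d u l).Nodup := by
  induction l generalizing d u with
  | nil => simp [liftFrom]
  | cons v l ih =>
    obtain ⟨hu, h⟩ := List.nodup_cons.1 h
    have hfresh : ∀ e e', (u, e') ∉ liftFrom dir e v l := fun e e' hmem =>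
      hu (fst_mem_of_mem_liftFrom hmem)
    rw [liftFrom]
    split <;> simp_all [Ne.symm]

lemma isChain_steps_liftFrom (d : Dir) {u : V0} {l : List V0} (h : (u :: l).Nodup) :
    (steps (liftFrom dir d u l)).IsChain fun e f => ¬ (e.1.1 = e.2.1 ∧ f.1.1 = f.2.1) := by
  induction l generalizing d u with
  | nil => simp [liftFrom]
  | cons v l ih =>
    obtain ⟨hu, h⟩ := List.nodup_cons.1 h
    have huv : u ≠ v := fun huv => hu (huv ▸ List.mem_cons_self)
    rw [liftFrom]
    split <;> simp_all [List.isChain_cons, steps_cons_of_head?_eq_some]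

lemma isEPath_lift {s t : V0} {p : List V0} (hp : IsPhysPath E0 s t p) :
    IsEPath E0 dir s t (lift dir p) := by
  obtain ⟨hne, hE, hs, ht, hnd⟩ := hp
  obtain ⟨u, l, rfl⟩ := List.exists_cons_of_ne_nil hne
  refine ⟨?_, isChain_liftFrom _ hE, nodup_liftFrom _ hnd, ?_, ?_, ?_⟩
  · exact List.ne_nil_of_mem (List.mem_of_mem_head? (head?_liftFrom _ u l))
  · rw [lift, List.head?_map, head?_liftFrom]; simpa using hs
  · rw [lift, getLast?_map_fst_liftFrom]; exact ht
  · exact isChain_iff_forall_mem_steps.1 (isChain_steps_liftFrom _ hnd)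

end Lift

section LiftCount

variable {V0 : Type} [DecidableEq V0] {dir : V0 → V0 → Dir}

lemma numVirtual_liftFrom (d : Dir) {u : V0} {l : List V0} (h : (u :: l).Nodup) :
    numVirtual (liftFrom dir d u l) = changes (d :: dirs dir (u :: l)) := by
  induction l generalizing d u with
  | nil => simp [liftFrom, numVirtual, dirs]
  | cons v l ih =>
    obtain ⟨hu, h⟩ := List.nodup_cons.1 h
    have huv : u ≠ v := fun huv => hu (huv ▸ List.mem_cons_self)
    have hdirs : dirs dir (u :: v :: l) = dir u v :: dirs dir (v :: l) := rfl
    rw [liftFrom, hdirs, changes_cons_cons]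
    split <;> simp_all [numVirtual, steps_cons_of_head?_eq_some, Ne.symm]

lemma numVirtual_lift {p : List V0} (hp : p.Nodup) : numVirtual (lift dir p) = elbows dir p := by
  cases p with
  | nil => rfl
  | cons u l => rw [lift, numVirtual_liftFrom _ hp, elbows_eq_changes_dirs, changes_headD_cons]

end LiftCount

section Cost

variable {V0 : Type} (pos : V0 → EuclideanSpace ℝ (Fin 3))

lemma ecost_eq_add [DecidableEq V0] (β : ℝ) (w : List (V0 × Dir)) :
    ecost pos β w = ecost pos 0 w + β * numVirtual w := by
  rw [ecost, ecost, numVirtual]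
  induction steps w with
  | nil => simp
  | cons q S ih =>
    by_cases h : q.1.1 = q.2.1 <;> simp [h, ih] <;> ring

lemma ecost_zero_nonneg (w : List (V0 × Dir)) : 0 ≤ ecost pos 0 w :=
  List.sum_nonneg fun x hx => by
    obtain ⟨q, -, rfl⟩ := List.mem_map.1 hx
    split <;> simp [dist_nonneg]

end Cost

lemma Nat.le_of_add_mul_le_add_mul {a b β : ℝ} {m n : ℕ} (ha : 0 ≤ a) (hb : 0 ≤ b)
    (hβ : b < β) (h : a + β * m ≤ b + β * n) : m ≤ n := by
  by_contra! hnm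
  have hmn : (n : ℝ) + 1 ≤ m := by exact_mod_cast hnm
  nlinarith [mul_le_mul_of_nonneg_left hmn (hb.trans hβ.le)]

theorem stmt17_general {V0 : Type} [DecidableEq V0]
    (E0 : V0 → V0 → Prop) (dir : V0 → V0 → Dir) (pos : V0 → EuclideanSpace ℝ (Fin 3))
    (s t : V0)
    (hconn : ∃ p, IsPhysPath E0 s t p) :
    (∀ (m : ℕ) (w : List (V0 × Dir)),
      w ≠ [] → w.Chain' (EAdj E0 dir) →
      (w.map Prod.fst).head? = some s → (w.map Prod.fst).getLast? = some t →
      (steps w).countP (fun q => decide (q.1.1 = q.2.1)) ≤ m →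
      ∃ p : List V0, p ≠ [] ∧ p.Chain' E0 ∧ p.head? = some s ∧ p.getLast? = some t ∧
        elbows dir p ≤ m) ∧
    ∃ β0 : ℝ, ∀ β : ℝ, β0 ≤ β →
      ∀ w : List (V0 × Dir), IsEPath E0 dir s t w →
        (∀ w', IsEPath E0 dir s t w' → ecost pos β w ≤ ecost pos β w') →
        (steps w).countP (fun q => decide (q.1.1 = q.2.1)) =
          sInf {n : ℕ | ∃ p, IsPhysPath E0 s t p ∧ elbows dir p = n} := by
  refine ⟨fun m w hw hE hs ht hm => ?_, ?_⟩
  · obtain ⟨p, ⟨hp, hpE, hps, hpt, -⟩, hle⟩ :=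
      exists_isPhysPath_elbows_le_numVirtual hw hE hs ht
    exact ⟨p, hp, hpE, hps, hpt, hle.trans hm⟩
  obtain ⟨p, hp, hpmin⟩ := exists_elbows_eq_minElbows dir hconn
  refine ⟨ecost pos 0 (lift dir p) + 1, fun β hβ w hw hmin => le_antisymm ?_ ?_⟩
  · have hcost := hmin _ (isEPath_lift hp)
    rw [ecost_eq_add, ecost_eq_add pos β (lift dir p), numVirtual_lift hp.2.2.2.2, hpmin] at hcost
    exact Nat.le_of_add_mul_le_add_mul (ecost_zero_nonneg pos w)
      (ecost_zero_nonneg pos _) (by linarith) hcost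
  · obtain ⟨hne, hE, -, hs, ht, -⟩ := hw
    obtain ⟨q, hq, hle⟩ := exists_isPhysPath_elbows_le_numVirtual hne hE hs ht
    exact (minElbows_le hq).trans hle

/-- Every walk in the exploded graph from a copy of `s` to a copy of `t` using at most `m`
virtual edges yields a physical `s`–`t` path with at most `m` elbows; and for all large
enough elbow penalties `β`, any cost-minimal exploded path uses the minimum possible number
of elbows among all physical `s`–`t` paths. -/
theorem stmt17 {V0 : Type} [DecidableEq V0] [Fintype V0]
    (E0 : V0 → V0 → Prop) (dir : V0 → V0 → Dir) (pos : V0 → EuclideanSpace ℝ (Fin 3))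
    (hirr : ∀ u v, E0 u v → u ≠ v) (s t : V0)
    (hconn : ∃ p, IsPhysPath E0 s t p) :
    (∀ (m : ℕ) (w : List (V0 × Dir)),
      w ≠ [] → w.Chain' (EAdj E0 dir) →
      (w.map Prod.fst).head? = some s → (w.map Prod.fst).getLast? = some t →
      (steps w).countP (fun q => decide (q.1.1 = q.2.1)) ≤ m →
      ∃ p : List V0, p ≠ [] ∧ p.Chain' E0 ∧ p.head? = some s ∧ p.getLast? = some t ∧
        elbows dir p ≤ m) ∧
    ∃ β0 : ℝ, ∀ β : ℝ, β0 ≤ β →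
      ∀ w : List (V0 × Dir), IsEPath E0 dir s t w →
        (∀ w', IsEPath E0 dir s t w' → ecost pos β w ≤ ecost pos β w') →
        (steps w).countP (fun q => decide (q.1.1 = q.2.1)) =
          sInf {n : ℕ | ∃ p, IsPhysPath E0 s t p ∧ elbows dir p = n} :=
  stmt17_general E0 dir pos s t hconn
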